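/- Let A be an arrangement of 9 distinct lines in the complex projective plane P^2(C) such that every point lying on at least two lines of A lies on exactly three lines of A (i.e. A has no double points and only triple points). Then A has exactly 12 triple points, and there is a bijection φ : A → F_3 × F_3 such that three distinct lines of A are concurrent if and only if the sum of their φ-images is (0,0); in particular any two such arrangements are lattice isomorphic (the combinatorics is that of the Ceva arrangement). -/
import Mathlib


open scoped Classical

noncomputable section

/-- The complex projective plane `P²(ℂ)`. -/
abbrev ProjPlane : Type := Projectivization ℂ (Fin 3 → ℂ)

/-- A subset of `P²(ℂ)` is a projective line if it is the zero locus of a nonzero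
linear form. -/
def IsProjLine (S : Set ProjPlane) : Prop :=
  ∃ f : (Fin 3 → ℂ) →ₗ[ℂ] ℂ, f ≠ 0 ∧ S = {p : ProjPlane | f p.rep = 0}

/-- The lines of the arrangement `A` passing through the point `p`. -/
def linesThrough (A : Finset (Set ProjPlane)) (p : ProjPlane) : Finset (Set ProjPlane) :=
  A.filter fun L => p ∈ L

/-- The multiplicity of a point `p` with respect to the arrangement `A`. -/
def mult (A : Finset (Set ProjPlane)) (p : ProjPlane) : ℕ :=
  (linesThrough A p).card

/-- `p` is a multiple point of the arrangement `A` (at least two lines pass through it). -/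
def IsMultPoint (A : Finset (Set ProjPlane)) (p : ProjPlane) : Prop :=
  2 ≤ mult A p

/-- A `q`-cocycle of the line arrangement `A`: for every multiple point `p`,
if `q` divides the multiplicity then the values of `η` on the lines through `p` sum to `0`,
and otherwise `η` is constant on the lines through `p`. -/
def IsCocycle (q : ℕ) (A : Finset (Set ProjPlane)) (η : Set ProjPlane → ZMod q) : Prop :=
  ∀ p : ProjPlane, IsMultPoint A p →
    ((q ∣ mult A p → ∑ L ∈ linesThrough A p, η L = 0) ∧
     (¬ q ∣ mult A p → ∀ L ∈ linesThrough A p, ∀ K ∈ linesThrough A p, η L = η K))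

/-- A function on lines is non-constant on the arrangement `A`. -/
def NonConstant {α : Type*} (A : Finset (Set ProjPlane)) (η : Set ProjPlane → α) : Prop :=
  ∃ L ∈ A, ∃ K ∈ A, η L ≠ η K

/-- A `(k,q)`-net structure on the line arrangement `A`, with classes `C 0, …, C (k-1)`:
the classes partition `A` into `k` classes of `q` lines each, and whenever two lines from
different classes meet, their intersection point lies on exactly one line of each class. -/
def IsNet (k q : ℕ) (A : Finset (Set ProjPlane)) (C : Fin k → Finset (Set ProjPlane)) : Prop :=
  (∀ L ∈ A, IsProjLine L) ∧
  A.card = k * q ∧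
  (∀ i, (C i).card = q) ∧
  (∀ i j, i ≠ j → Disjoint (C i) (C j)) ∧
  (∀ i, C i ⊆ A) ∧
  (∀ L ∈ A, ∃ i, L ∈ C i) ∧
  (∀ i j, i ≠ j → ∀ L ∈ C i, ∀ K ∈ C j, ∀ p : ProjPlane, p ∈ L → p ∈ K →
    ∀ m : Fin k, ∃! N, N ∈ C m ∧ p ∈ N)

/-- Lattice isomorphism of two line arrangements: a bijection between the lines such that
a subfamily of lines has a common point iff the image subfamily has a common point. -/
def LatticeIso (A B : Finset (Set ProjPlane)) : Prop :=
  ∃ φ : Set ProjPlane → Set ProjPlane, Set.BijOn φ ↑A ↑B ∧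
    ∀ S : Finset (Set ProjPlane), S ⊆ A →
      ((∃ p : ProjPlane, ∀ L ∈ S, p ∈ L) ↔ ∃ p : ProjPlane, ∀ L ∈ S, p ∈ φ L)

/-- The projective line with homogeneous equation `a·x + b·y + c·z = 0`. -/
def lineOf (a b c : ℂ) : Set ProjPlane :=
  {p : ProjPlane | a * p.rep 0 + b * p.rep 1 + c * p.rep 2 = 0}

instance : Nonempty ProjPlane := ⟨Projectivization.mk ℂ (fun _ => 1) (by
  intro h; have := congrFun h 0; simp at this)⟩

lemma mem_zeroset_iff (f : (Fin 3 → ℂ) →ₗ[ℂ] ℂ) (v : Fin 3 → ℂ) (hv : v ≠ 0) :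
    (Projectivization.mk ℂ v hv ∈ {p : ProjPlane | f p.rep = 0}) ↔ f v = 0 := by
  obtain ⟨a, ha⟩ := Projectivization.exists_smul_eq_mk_rep ℂ v hv
  rw [Units.smul_def] at ha
  constructor
  · intro h
    have h2 : f ((a : ℂ) • v) = 0 := by rw [ha]; exact h
    rw [map_smul, smul_eq_zero] at h2
    rcases h2 with h1 | h1
    · exact absurd h1 a.ne_zero
    · exact h1
  · intro h
    have h2 : f ((Projectivization.mk ℂ v hv).rep) = f ((a : ℂ) • v) := by rw [ha]
    show f _ = 0
    rw [h2, map_smul, h, smul_zero]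

lemma rep_mem_iff (f : (Fin 3 → ℂ) →ₗ[ℂ] ℂ) (p : ProjPlane) :
    p ∈ {q : ProjPlane | f q.rep = 0} ↔ f p.rep = 0 := Iff.rfl

-- kernel dim 2
lemma ker_finrank (f : (Fin 3 → ℂ) →ₗ[ℂ] ℂ) (hf : f ≠ 0) :
    Module.finrank ℂ (LinearMap.ker f) = 2 := by
  have h := LinearMap.finrank_range_add_finrank_ker f
  have hr : Module.finrank ℂ (LinearMap.range f) = 1 := by
    have : LinearMap.range f = ⊤ := by
      rw [LinearMap.range_eq_top]
      intro c
      obtain ⟨v, hv⟩ : ∃ v, f v ≠ 0 := by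
        by_contra h'
        push_neg at h'
        exact hf (LinearMap.ext fun v => h' v)
      exact ⟨(c / f v) • v, by simp [hv]⟩
    rw [this]
    simp [finrank_top]
  have hdim : Module.finrank ℂ (Fin 3 → ℂ) = 3 := by simp
  omega

lemma line_eq_of_ker_eq {f g : (Fin 3 → ℂ) →ₗ[ℂ] ℂ}
    (h : LinearMap.ker f = LinearMap.ker g) :
    {p : ProjPlane | f p.rep = 0} = {p : ProjPlane | g p.rep = 0} := by
  ext p
  constructor <;> intro hp
  · have : p.rep ∈ LinearMap.ker f := hp
    rw [h] at this; exact this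
  · have : p.rep ∈ LinearMap.ker g := hp
    rw [← h] at this; exact this

/-- two distinct lines meet in exactly one point -/
lemma lines_meet {L K : Set ProjPlane} (hL : IsProjLine L) (hK : IsProjLine K)
    (hne : L ≠ K) : ∃! p : ProjPlane, p ∈ L ∧ p ∈ K := by
  obtain ⟨f, hf, rfl⟩ := hL
  obtain ⟨g, hg, rfl⟩ := hK
  have hker : LinearMap.ker f ≠ LinearMap.ker g := fun h => hne (line_eq_of_ker_eq h)
  -- existence
  have hinf : Module.finrank ℂ ↥(LinearMap.ker f ⊓ LinearMap.ker g) ≥ 1 := by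
    have := Submodule.finrank_sup_add_finrank_inf_eq (LinearMap.ker f) (LinearMap.ker g)
    have h1 : Module.finrank ℂ ↥(LinearMap.ker f ⊔ LinearMap.ker g) ≤ 3 := by
      have := Submodule.finrank_le (LinearMap.ker f ⊔ LinearMap.ker g)
      simpa using this
    rw [ker_finrank f hf, ker_finrank g hg] at this
    omega
  have hbot : LinearMap.ker f ⊓ LinearMap.ker g ≠ ⊥ := by
    intro h
    rw [h] at hinf
    simp [finrank_bot] at hinf
  obtain ⟨v, hvmem, hvne⟩ := Submodule.exists_mem_ne_zero_of_ne_bot hbot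
  have hfv : f v = 0 := (Submodule.mem_inf.mp hvmem).1
  have hgv : g v = 0 := (Submodule.mem_inf.mp hvmem).2
  refine ⟨Projectivization.mk ℂ v hvne, ⟨(mem_zeroset_iff f v hvne).mpr hfv,
    (mem_zeroset_iff g v hvne).mpr hgv⟩, ?_⟩
  rintro q ⟨hq1, hq2⟩
  -- uniqueness
  by_contra hqne
  set w := q.rep with hw
  have hwne : w ≠ 0 := q.rep_nonzero
  have hfw : f w = 0 := hq1
  have hgw : g w = 0 := hq2
  have hind : LinearIndependent ℂ ![w, v] := by
    rw [LinearIndependent.pair_iff' hwne]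
    intro a ha
    apply hqne
    have hane : a ≠ 0 := by rintro rfl; simp at ha; exact hvne ha.symm
    conv_lhs => rw [← Projectivization.mk_rep q]
    exact (Projectivization.mk_eq_mk_iff' ℂ q.rep v q.rep_nonzero hvne).mpr
      ⟨a⁻¹, by rw [← ha, smul_smul, inv_mul_cancel₀ hane, one_smul]⟩
  have hspan : Submodule.span ℂ {w, v} ≤ LinearMap.ker f := by
    rw [Submodule.span_le]
    rintro x (rfl | rfl)
    · exact hfw
    · exact hfv
  have hspang : Submodule.span ℂ {w, v} ≤ LinearMap.ker g := by
    rw [Submodule.span_le]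
    rintro x (rfl | rfl)
    · exact hgw
    · exact hgv
  have hfr : Module.finrank ℂ ↥(Submodule.span ℂ {w, v}) = 2 := by
    have : Submodule.span ℂ {w, v} = Submodule.span ℂ (Set.range ![w, v]) := by
      congr 1
      rw [Set.pair_comm] at *
      simp [Matrix.range_cons, Matrix.range_empty, Set.pair_comm]
    rw [this, finrank_span_eq_card hind]
    simp
  have e1 : Submodule.span ℂ {w, v} = LinearMap.ker f :=
    Submodule.eq_of_le_of_finrank_eq hspan (by rw [hfr, ker_finrank f hf])
  have e2 : Submodule.span ℂ {w, v} = LinearMap.ker g :=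
    Submodule.eq_of_le_of_finrank_eq hspang (by rw [hfr, ker_finrank g hg])
  exact hker (e1 ▸ e2)


lemma line_nonempty {L : Set ProjPlane} (hL : IsProjLine L) : ∃ p, p ∈ L := by
  obtain ⟨f, hf, rfl⟩ := hL
  have h2 : Module.finrank ℂ (LinearMap.ker f) = 2 := ker_finrank f hf
  have hbot : LinearMap.ker f ≠ ⊥ := by
    intro h; rw [h] at h2; simp [finrank_bot] at h2
  obtain ⟨v, hvmem, hvne⟩ := Submodule.exists_mem_ne_zero_of_ne_bot hbot
  exact ⟨Projectivization.mk ℂ v hvne, (mem_zeroset_iff f v hvne).mpr hvmem⟩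

lemma mem_linesThrough {A : Finset (Set ProjPlane)} {p : ProjPlane} {L : Set ProjPlane} :
    L ∈ linesThrough A p ↔ L ∈ A ∧ p ∈ L := by
  simp [linesThrough]

lemma mult_three_of_two {A : Finset (Set ProjPlane)}
    (hAmult : ∀ p : ProjPlane, IsMultPoint A p → mult A p = 3)
    {p : ProjPlane} {L K : Set ProjPlane} (hL : L ∈ A) (hK : K ∈ A) (hne : L ≠ K)
    (hpL : p ∈ L) (hpK : p ∈ K) : mult A p = 3 := by
  apply hAmult
  have hsub : ({L, K} : Finset (Set ProjPlane)) ⊆ linesThrough A p := by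
    intro N hN
    simp only [Finset.mem_insert, Finset.mem_singleton] at hN
    rcases hN with rfl | rfl
    · exact mem_linesThrough.mpr ⟨hL, hpL⟩
    · exact mem_linesThrough.mpr ⟨hK, hpK⟩
  have := Finset.card_le_card hsub
  rwa [Finset.card_insert_of_notMem (by simpa using hne), Finset.card_singleton] at this

/-- key structure: the third-line function -/
lemma arr_t (A : Finset (Set ProjPlane)) (hAlines : ∀ L ∈ A, IsProjLine L)
    (hAmult : ∀ p : ProjPlane, IsMultPoint A p → mult A p = 3) :
    ∃ t : Set ProjPlane → Set ProjPlane → Set ProjPlane,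
      (∀ L ∈ A, ∀ K ∈ A, L ≠ K → t L K ∈ A ∧ t L K ≠ L ∧ t L K ≠ K) ∧
      (∀ L ∈ A, ∀ K ∈ A, L ≠ K → t L K = t K L) ∧
      (∀ L ∈ A, ∀ K ∈ A, L ≠ K → t L (t L K) = K) ∧
      (∀ L ∈ A, ∀ K ∈ A, L ≠ K → ∀ p, p ∈ L → p ∈ K → p ∈ t L K) ∧
      (∀ L ∈ A, ∀ K ∈ A, ∀ M ∈ A, L ≠ K → M ≠ L → M ≠ K →
        (∃ p, p ∈ L ∧ p ∈ K ∧ p ∈ M) → t L K = M) := by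
  classical
  set Q : Set ProjPlane → Set ProjPlane → Set ProjPlane → Prop :=
    fun L K M => M ∈ A ∧ M ≠ L ∧ M ≠ K ∧ ∀ p, p ∈ L → p ∈ K → p ∈ M with hQ
  have huniq : ∀ L ∈ A, ∀ K ∈ A, L ≠ K → ∀ M M', Q L K M → Q L K M' → M = M' := by
    intro L hL K hK hne M M' hM hM'
    by_contra hMM
    obtain ⟨P, ⟨hPL, hPK⟩, -⟩ := lines_meet (hAlines L hL) (hAlines K hK) hne
    have h4 : ({L, K, M, M'} : Finset (Set ProjPlane)) ⊆ linesThrough A P := by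
      intro N hN
      simp only [Finset.mem_insert, Finset.mem_singleton] at hN
      rcases hN with rfl | rfl | rfl | rfl
      · exact mem_linesThrough.mpr ⟨hL, hPL⟩
      · exact mem_linesThrough.mpr ⟨hK, hPK⟩
      · exact mem_linesThrough.mpr ⟨hM.1, hM.2.2.2 P hPL hPK⟩
      · exact mem_linesThrough.mpr ⟨hM'.1, hM'.2.2.2 P hPL hPK⟩
    have hcard4 : ({L, K, M, M'} : Finset (Set ProjPlane)).card = 4 := by
      rw [Finset.card_insert_of_notMem (by
          simp only [Finset.mem_insert, Finset.mem_singleton]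
          push_neg
          exact ⟨hne, fun h => hM.2.1 h.symm, fun h => hM'.2.1 h.symm⟩),
        Finset.card_insert_of_notMem (by
          simp only [Finset.mem_insert, Finset.mem_singleton]
          push_neg
          exact ⟨fun h => hM.2.2.1 h.symm, fun h => hM'.2.2.1 h.symm⟩),
        Finset.card_insert_of_notMem (by simpa using hMM),
        Finset.card_singleton]
    have h3 : mult A P = 3 := mult_three_of_two hAmult hL hK hne hPL hPK
    have := Finset.card_le_card h4
    rw [hcard4] at this
    unfold mult at h3
    omega
  have hex : ∀ L ∈ A, ∀ K ∈ A, L ≠ K → ∃ M, Q L K M := by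
    intro L hL K hK hne
    obtain ⟨P, ⟨hPL, hPK⟩, hPu⟩ := lines_meet (hAlines L hL) (hAlines K hK) hne
    have h3 : mult A P = 3 := mult_three_of_two hAmult hL hK hne hPL hPK
    have hsub : ({L, K} : Finset (Set ProjPlane)) ⊆ linesThrough A P := by
      intro N hN
      simp only [Finset.mem_insert, Finset.mem_singleton] at hN
      rcases hN with rfl | rfl
      · exact mem_linesThrough.mpr ⟨hL, hPL⟩
      · exact mem_linesThrough.mpr ⟨hK, hPK⟩
    have hcard2 : ({L, K} : Finset (Set ProjPlane)).card = 2 := by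
      rw [Finset.card_insert_of_notMem (by simpa using hne), Finset.card_singleton]
    have hd : (linesThrough A P \ {L, K}).card = 1 := by
      rw [Finset.card_sdiff_of_subset hsub, hcard2]
      unfold mult at h3
      omega
    obtain ⟨M, hMmem⟩ := Finset.card_pos.mp (by omega : 0 < (linesThrough A P \ {L, K}).card)
    rw [Finset.mem_sdiff] at hMmem
    obtain ⟨hMlt, hMns⟩ := hMmem
    simp only [Finset.mem_insert, Finset.mem_singleton, not_or] at hMns
    refine ⟨M, mem_linesThrough.mp hMlt |>.1, hMns.1, hMns.2, ?_⟩
    intro p hpL hpK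
    have : p = P := hPu p ⟨hpL, hpK⟩
    rw [this]
    exact (mem_linesThrough.mp hMlt).2
  set t : Set ProjPlane → Set ProjPlane → Set ProjPlane :=
    fun L K => if h : ∃ M, Q L K M then h.choose else ∅ with ht
  have htQ : ∀ L ∈ A, ∀ K ∈ A, L ≠ K → Q L K (t L K) := by
    intro L hL K hK hne
    have h := hex L hL K hK hne
    simp only [ht, dif_pos h]
    exact h.choose_spec
  have hconc : ∀ L ∈ A, ∀ K ∈ A, ∀ M ∈ A, L ≠ K → M ≠ L → M ≠ K →
      (∃ p, p ∈ L ∧ p ∈ K ∧ p ∈ M) → t L K = M := by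
    intro L hL K hK M hM hne hML hMK hp
    obtain ⟨p, hpL, hpK, hpM⟩ := hp
    refine huniq L hL K hK hne _ _ (htQ L hL K hK hne) ⟨hM, hML, hMK, ?_⟩
    intro p' hp'L hp'K
    obtain ⟨P, hPmem, hPu⟩ := lines_meet (hAlines L hL) (hAlines K hK) hne
    have h1 : p' = P := hPu p' ⟨hp'L, hp'K⟩
    have h2 : p = P := hPu p ⟨hpL, hpK⟩
    rw [h1, ← h2]
    exact hpM
  refine ⟨t, ?_, ?_, ?_, ?_, hconc⟩
  · intro L hL K hK hne
    obtain ⟨h1, h2, h3, h4⟩ := htQ L hL K hK hne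
    exact ⟨h1, h2, h3⟩
  · intro L hL K hK hne
    obtain ⟨h1, h2, h3, h4⟩ := htQ K hK L hL hne.symm
    exact (huniq L hL K hK hne _ _ (htQ L hL K hK hne)
      ⟨h1, h3, h2, fun p hpL hpK => h4 p hpK hpL⟩)
  · intro L hL K hK hne
    obtain ⟨hM1, hM2, hM3, hM4⟩ := htQ L hL K hK hne
    have hneLM : L ≠ t L K := fun h => hM2 h.symm
    apply huniq L hL (t L K) hM1 hneLM _ _ (htQ L hL (t L K) hM1 hneLM)
    refine ⟨hK, hne.symm, fun h => hM3 h.symm, ?_⟩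
    intro p hpL hpM
    obtain ⟨P, ⟨hPL, hPK⟩, hPu⟩ := lines_meet (hAlines L hL) (hAlines K hK) hne
    obtain ⟨P', hP'mem, hP'u⟩ := lines_meet (hAlines L hL) (hAlines (t L K) hM1) hneLM
    have h1 : P = P' := hP'u P ⟨hPL, hM4 P hPL hPK⟩
    have h2 : p = P' := hP'u p ⟨hpL, hpM⟩
    rw [h2, ← h1]
    exact hPK
  · intro L hL K hK hne p hpL hpK
    exact (htQ L hL K hK hne).2.2.2 p hpL hpK


lemma count12 (A : Finset (Set ProjPlane)) (hAlines : ∀ L ∈ A, IsProjLine L)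
    (hAcard : A.card = 9)
    (hAmult : ∀ p : ProjPlane, IsMultPoint A p → mult A p = 3) :
    {p : ProjPlane | mult A p = 3}.ncard = 12 := by
  classical
  set P2 : Set ProjPlane → Set ProjPlane → ProjPlane :=
    fun L K => if h : ∃ p, p ∈ L ∧ p ∈ K then h.choose else Classical.arbitrary _ with hP2
  have hP2spec : ∀ L ∈ A, ∀ K ∈ A, L ≠ K → (P2 L K ∈ L ∧ P2 L K ∈ K) ∧
      ∀ p, p ∈ L → p ∈ K → p = P2 L K := by
    intro L hL K hK hne
    obtain ⟨p₀, hp₀, hu⟩ := lines_meet (hAlines L hL) (hAlines K hK) hne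
    have hex : ∃ p, p ∈ L ∧ p ∈ K := ⟨p₀, hp₀⟩
    have : P2 L K = hex.choose := by simp only [hP2, dif_pos hex]
    rw [this]
    refine ⟨hex.choose_spec, ?_⟩
    intro p hpL hpK
    rw [hu p ⟨hpL, hpK⟩, hu hex.choose hex.choose_spec]
  set M : Finset ProjPlane := A.offDiag.image (fun z => P2 z.1 z.2) with hM
  have hset : {p : ProjPlane | mult A p = 3} = ↑M := by
    ext p
    simp only [Set.mem_setOf_eq, Finset.coe_image, Set.mem_image, Finset.mem_coe,
      Finset.mem_offDiag, hM]
    constructor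
    · intro h3
      have h2 : 2 ≤ (linesThrough A p).card := by unfold mult at h3; omega
      obtain ⟨L, hL, K, hK, hLK⟩ := Finset.one_lt_card.mp h2
      have hLA := mem_linesThrough.mp hL
      have hKA := mem_linesThrough.mp hK
      refine ⟨(L, K), ⟨hLA.1, hKA.1, hLK⟩, ?_⟩
      exact ((hP2spec L hLA.1 K hKA.1 hLK).2 p hLA.2 hKA.2).symm
    · rintro ⟨⟨L, K⟩, ⟨hL, hK, hLK⟩, rfl⟩
      exact mult_three_of_two hAmult hL hK hLK
        ((hP2spec L hL K hK hLK).1).1 ((hP2spec L hL K hK hLK).1).2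
  rw [hset, Set.ncard_coe_finset]
  -- double counting
  have hfib : ∀ m ∈ M, (A.offDiag.filter (fun z => P2 z.1 z.2 = m)).card = 6 := by
    intro m hm
    have hmmult : mult A m = 3 := by
      have : m ∈ ({p : ProjPlane | mult A p = 3} : Set ProjPlane) := by
        rw [hset]; exact_mod_cast hm
      exact this
    have hfeq : A.offDiag.filter (fun z => P2 z.1 z.2 = m) = (linesThrough A m).offDiag := by
      ext ⟨L, K⟩
      simp only [Finset.mem_filter, Finset.mem_offDiag, mem_linesThrough]
      constructor
      · rintro ⟨⟨hL, hK, hLK⟩, hP⟩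
        have hs := (hP2spec L hL K hK hLK).1
        rw [hP] at hs
        exact ⟨⟨hL, hs.1⟩, ⟨hK, hs.2⟩, hLK⟩
      · rintro ⟨⟨hL, hmL⟩, ⟨hK, hmK⟩, hLK⟩
        exact ⟨⟨hL, hK, hLK⟩, ((hP2spec L hL K hK hLK).2 m hmL hmK).symm⟩
    rw [hfeq, Finset.offDiag_card]
    unfold mult at hmmult
    rw [hmmult]
  have hcount := Finset.card_eq_sum_card_fiberwise
    (fun z hz => Finset.mem_image_of_mem (fun z => P2 z.1 z.2) hz : ∀ z ∈ A.offDiag, P2 z.1 z.2 ∈ M)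
  rw [Finset.offDiag_card, hAcard] at hcount
  rw [Finset.sum_congr rfl hfib, Finset.sum_const, smul_eq_mul] at hcount
  omega


set_option maxHeartbeats 3200000 in
lemma sts9 {α : Type u_sts} [DecidableEq α] (X : Finset α) (hX : X.card = 9)
    (t : α → α → α)
    (hmem : ∀ x ∈ X, ∀ y ∈ X, x ≠ y → t x y ∈ X)
    (hne1 : ∀ x ∈ X, ∀ y ∈ X, x ≠ y → t x y ≠ x)
    (hne2 : ∀ x ∈ X, ∀ y ∈ X, x ≠ y → t x y ≠ y)
    (hsym : ∀ x ∈ X, ∀ y ∈ X, x ≠ y → t x y = t y x)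
    (hinv : ∀ x ∈ X, ∀ y ∈ X, x ≠ y → t x (t x y) = y) :
    ∃ φ : α → ZMod 3 × ZMod 3, Set.BijOn φ ↑X Set.univ ∧
      ∀ x ∈ X, ∀ y ∈ X, x ≠ y → φ (t x y) = -(φ x + φ y) := by
  classical
  obtain ⟨a, haX⟩ := Finset.card_pos.mp (by rw [hX]; norm_num)
  obtain ⟨b, hbE⟩ := Finset.card_pos.mp (by rw [Finset.card_erase_of_mem haX, hX]; norm_num : 0 < (X.erase a).card)
  have hbX : b ∈ X := Finset.mem_of_mem_erase hbE
  have ne_b_a : b ≠ a := Finset.ne_of_mem_erase hbE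
  have ne_a_b : a ≠ b := ne_b_a.symm
  obtain ⟨c, hcdef⟩ : ∃ c, t a b = c := ⟨_, rfl⟩
  have hcX : c ∈ X := hcdef ▸ hmem a haX b hbX ne_a_b
  have ne_c_a : c ≠ a := hcdef ▸ hne1 a haX b hbX ne_a_b
  have ne_a_c : a ≠ c := ne_c_a.symm
  have ne_c_b : c ≠ b := hcdef ▸ hne2 a haX b hbX ne_a_b
  have ne_b_c : b ≠ c := ne_c_b.symm
  have f_a_b : t a b = c := hcdef
  have f_b_a : t b a = c := by rw [← hsym a haX b hbX ne_a_b]; exact f_a_b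
  have f_a_c : t a c = b := by have hq := hinv a haX b hbX ne_a_b; rw [f_a_b] at hq; exact hq
  have f_c_a : t c a = b := by rw [← hsym a haX c hcX ne_a_c]; exact f_a_c
  have f_b_c : t b c = a := by have hq := hinv b hbX a haX ne_b_a; rw [f_b_a] at hq; exact hq
  have f_c_b : t c b = a := by rw [← hsym b hbX c hcX ne_b_c]; exact f_b_c
  have hsub3 : ({a, b, c} : Finset α) ⊆ X := by
    intro z hz
    simp only [Finset.mem_insert, Finset.mem_singleton] at hz
    rcases hz with rfl|rfl|rfl
    exacts [haX, hbX, hcX]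
  have hc3 : ({a, b, c} : Finset α).card = 3 := by
    rw [Finset.card_insert_of_notMem (by simp only [Finset.mem_insert, Finset.mem_singleton, not_or]; exact ⟨ne_a_b, ne_a_c⟩),
      Finset.card_insert_of_notMem (by simp only [Finset.mem_singleton]; exact ne_b_c), Finset.card_singleton]
  obtain ⟨p, hpE⟩ := Finset.card_pos.mp (by rw [Finset.card_sdiff_of_subset hsub3, hc3, hX]; norm_num : 0 < (X \ {a, b, c}).card)
  have hpX : p ∈ X := (Finset.mem_sdiff.mp hpE).1
  have hpn := (Finset.mem_sdiff.mp hpE).2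
  simp only [Finset.mem_insert, Finset.mem_singleton, not_or] at hpn
  have ne_p_a : p ≠ a := hpn.1
  have ne_a_p : a ≠ p := ne_p_a.symm
  have ne_p_b : p ≠ b := hpn.2.1
  have ne_b_p : b ≠ p := ne_p_b.symm
  have ne_p_c : p ≠ c := hpn.2.2
  have ne_c_p : c ≠ p := ne_p_c.symm
  obtain ⟨s, hsdef⟩ : ∃ z, t a p = z := ⟨_, rfl⟩
  have hsX : s ∈ X := hsdef ▸ hmem a haX p hpX ne_a_p
  have ne_s_a : s ≠ a := hsdef ▸ hne1 a haX p hpX ne_a_p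
  have ne_a_s : a ≠ s := ne_s_a.symm
  have ne_s_p : s ≠ p := hsdef ▸ hne2 a haX p hpX ne_a_p
  have ne_p_s : p ≠ s := ne_s_p.symm
  have ne_s_b : s ≠ b := by
    intro he
    have h : t a p = b := hsdef.trans he
    have hq := hinv a haX p hpX ne_a_p
    rw [h, f_a_b] at hq
    exact ne_c_p hq
  have ne_b_s : b ≠ s := ne_s_b.symm
  have ne_s_c : s ≠ c := by
    intro he
    have h : t a p = c := hsdef.trans he
    have hq := hinv a haX p hpX ne_a_p
    rw [h, f_a_c] at hq
    exact ne_b_p hq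
  have ne_c_s : c ≠ s := ne_s_c.symm
  have f_a_p : t a p = s := hsdef
  have f_p_a : t p a = s := by rw [← hsym a haX p hpX ne_a_p]; exact f_a_p
  have f_a_s : t a s = p := by have hq := hinv a haX p hpX ne_a_p; rw [f_a_p] at hq; exact hq
  have f_s_a : t s a = p := by rw [← hsym a haX s hsX ne_a_s]; exact f_a_s
  have f_p_s : t p s = a := by have hq := hinv p hpX a haX ne_p_a; rw [f_p_a] at hq; exact hq
  have f_s_p : t s p = a := by rw [← hsym p hpX s hsX ne_p_s]; exact f_p_s
  obtain ⟨w, hwdef⟩ : ∃ z, t b p = z := ⟨_, rfl⟩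
  have hwX : w ∈ X := hwdef ▸ hmem b hbX p hpX ne_b_p
  have ne_w_b : w ≠ b := hwdef ▸ hne1 b hbX p hpX ne_b_p
  have ne_b_w : b ≠ w := ne_w_b.symm
  have ne_w_p : w ≠ p := hwdef ▸ hne2 b hbX p hpX ne_b_p
  have ne_p_w : p ≠ w := ne_w_p.symm
  have ne_w_a : w ≠ a := by
    intro he
    have h : t b p = a := hwdef.trans he
    have hq := hinv b hbX p hpX ne_b_p
    rw [h, f_b_a] at hq
    exact ne_c_p hq
  have ne_a_w : a ≠ w := ne_w_a.symm
  have ne_w_c : w ≠ c := by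
    intro he
    have h : t b p = c := hwdef.trans he
    have hq := hinv b hbX p hpX ne_b_p
    rw [h, f_b_c] at hq
    exact ne_a_p hq
  have ne_c_w : c ≠ w := ne_w_c.symm
  have ne_w_s : w ≠ s := by
    intro he
    have h : t b p = s := hwdef.trans he
    have h1 : t p b = s := by rw [← hsym b hbX p hpX ne_b_p]; exact h
    have hq := hinv p hpX b hbX ne_p_b
    rw [h1, f_p_s] at hq
    exact ne_a_b hq
  have ne_s_w : s ≠ w := ne_w_s.symm
  have f_b_p : t b p = w := hwdef
  have f_p_b : t p b = w := by rw [← hsym b hbX p hpX ne_b_p]; exact f_b_p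
  have f_b_w : t b w = p := by have hq := hinv b hbX p hpX ne_b_p; rw [f_b_p] at hq; exact hq
  have f_w_b : t w b = p := by rw [← hsym b hbX w hwX ne_b_w]; exact f_b_w
  have f_p_w : t p w = b := by have hq := hinv p hpX b hbX ne_p_b; rw [f_p_b] at hq; exact hq
  have f_w_p : t w p = b := by rw [← hsym p hpX w hwX ne_p_w]; exact f_p_w
  obtain ⟨u, hudef⟩ : ∃ z, t c p = z := ⟨_, rfl⟩
  have huX : u ∈ X := hudef ▸ hmem c hcX p hpX ne_c_p
  have ne_u_c : u ≠ c := hudef ▸ hne1 c hcX p hpX ne_c_p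
  have ne_c_u : c ≠ u := ne_u_c.symm
  have ne_u_p : u ≠ p := hudef ▸ hne2 c hcX p hpX ne_c_p
  have ne_p_u : p ≠ u := ne_u_p.symm
  have ne_u_a : u ≠ a := by
    intro he
    have h : t c p = a := hudef.trans he
    have hq := hinv c hcX p hpX ne_c_p
    rw [h, f_c_a] at hq
    exact ne_b_p hq
  have ne_a_u : a ≠ u := ne_u_a.symm
  have ne_u_b : u ≠ b := by
    intro he
    have h : t c p = b := hudef.trans he
    have hq := hinv c hcX p hpX ne_c_p
    rw [h, f_c_b] at hq
    exact ne_a_p hq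
  have ne_b_u : b ≠ u := ne_u_b.symm
  have ne_u_s : u ≠ s := by
    intro he
    have h : t c p = s := hudef.trans he
    have h1 : t p c = s := by rw [← hsym c hcX p hpX ne_c_p]; exact h
    have hq := hinv p hpX c hcX ne_p_c
    rw [h1, f_p_s] at hq
    exact ne_a_c hq
  have ne_s_u : s ≠ u := ne_u_s.symm
  have ne_u_w : u ≠ w := by
    intro he
    have h : t c p = w := hudef.trans he
    have h1 : t p c = w := by rw [← hsym c hcX p hpX ne_c_p]; exact h
    have hq := hinv p hpX c hcX ne_p_c
    rw [h1, f_p_w] at hq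
    exact ne_b_c hq
  have ne_w_u : w ≠ u := ne_u_w.symm
  have f_c_p : t c p = u := hudef
  have f_p_c : t p c = u := by rw [← hsym c hcX p hpX ne_c_p]; exact f_c_p
  have f_c_u : t c u = p := by have hq := hinv c hcX p hpX ne_c_p; rw [f_c_p] at hq; exact hq
  have f_u_c : t u c = p := by rw [← hsym c hcX u huX ne_c_u]; exact f_c_u
  have f_p_u : t p u = c := by have hq := hinv p hpX c hcX ne_p_c; rw [f_p_c] at hq; exact hq
  have f_u_p : t u p = c := by rw [← hsym p hpX u huX ne_p_u]; exact f_p_u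
  have hsub7 : ({a, b, c, p, s, w, u} : Finset α) ⊆ X := by
    intro z hz
    simp only [Finset.mem_insert, Finset.mem_singleton] at hz
    rcases hz with rfl|rfl|rfl|rfl|rfl|rfl|rfl
    exacts [haX, hbX, hcX, hpX, hsX, hwX, huX]
  have hc7 : ({a, b, c, p, s, w, u} : Finset α).card = 7 := by
    rw [Finset.card_insert_of_notMem (by simp only [Finset.mem_insert, Finset.mem_singleton, not_or]; exact ⟨ne_a_b, ne_a_c, ne_a_p, ne_a_s, ne_a_w, ne_a_u⟩),
    Finset.card_insert_of_notMem (by simp only [Finset.mem_insert, Finset.mem_singleton, not_or]; exact ⟨ne_b_c, ne_b_p, ne_b_s, ne_b_w, ne_b_u⟩),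
    Finset.card_insert_of_notMem (by simp only [Finset.mem_insert, Finset.mem_singleton, not_or]; exact ⟨ne_c_p, ne_c_s, ne_c_w, ne_c_u⟩),
    Finset.card_insert_of_notMem (by simp only [Finset.mem_insert, Finset.mem_singleton, not_or]; exact ⟨ne_p_s, ne_p_w, ne_p_u⟩),
    Finset.card_insert_of_notMem (by simp only [Finset.mem_insert, Finset.mem_singleton, not_or]; exact ⟨ne_s_w, ne_s_u⟩),
    Finset.card_insert_of_notMem (by simp only [Finset.mem_singleton]; exact ne_w_u), Finset.card_singleton]
  obtain ⟨q', hq'E⟩ := Finset.card_pos.mp (by rw [Finset.card_sdiff_of_subset hsub7, hc7, hX]; norm_num : 0 < (X \ {a, b, c, p, s, w, u}).card)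
  have hq'X : q' ∈ X := (Finset.mem_sdiff.mp hq'E).1
  have hq'n := (Finset.mem_sdiff.mp hq'E).2
  simp only [Finset.mem_insert, Finset.mem_singleton, not_or] at hq'n
  have ne_q1_a : q' ≠ a := hq'n.1
  have ne_a_q1 : a ≠ q' := ne_q1_a.symm
  have ne_q1_b : q' ≠ b := hq'n.2.1
  have ne_b_q1 : b ≠ q' := ne_q1_b.symm
  have ne_q1_c : q' ≠ c := hq'n.2.2.1
  have ne_c_q1 : c ≠ q' := ne_q1_c.symm
  have ne_q1_p : q' ≠ p := hq'n.2.2.2.1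
  have ne_p_q1 : p ≠ q' := ne_q1_p.symm
  have ne_q1_s : q' ≠ s := hq'n.2.2.2.2.1
  have ne_s_q1 : s ≠ q' := ne_q1_s.symm
  have ne_q1_w : q' ≠ w := hq'n.2.2.2.2.2.1
  have ne_w_q1 : w ≠ q' := ne_q1_w.symm
  have ne_q1_u : q' ≠ u := hq'n.2.2.2.2.2.2
  have ne_u_q1 : u ≠ q' := ne_q1_u.symm
  have hr'cd : 0 < ((X \ {a, b, c, p, s, w, u}).erase q').card := by
    rw [Finset.card_erase_of_mem hq'E, Finset.card_sdiff_of_subset hsub7, hc7, hX]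
    norm_num
  obtain ⟨r', hr'E⟩ := Finset.card_pos.mp hr'cd
  have ne_r1_q1 : r' ≠ q' := Finset.ne_of_mem_erase hr'E
  have ne_q1_r1 : q' ≠ r' := ne_r1_q1.symm
  have hr'E2 := Finset.mem_of_mem_erase hr'E
  have hr'X : r' ∈ X := (Finset.mem_sdiff.mp hr'E2).1
  have hr'n := (Finset.mem_sdiff.mp hr'E2).2
  simp only [Finset.mem_insert, Finset.mem_singleton, not_or] at hr'n
  have ne_r1_a : r' ≠ a := hr'n.1
  have ne_a_r1 : a ≠ r' := ne_r1_a.symm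
  have ne_r1_b : r' ≠ b := hr'n.2.1
  have ne_b_r1 : b ≠ r' := ne_r1_b.symm
  have ne_r1_c : r' ≠ c := hr'n.2.2.1
  have ne_c_r1 : c ≠ r' := ne_r1_c.symm
  have ne_r1_p : r' ≠ p := hr'n.2.2.2.1
  have ne_p_r1 : p ≠ r' := ne_r1_p.symm
  have ne_r1_s : r' ≠ s := hr'n.2.2.2.2.1
  have ne_s_r1 : s ≠ r' := ne_r1_s.symm
  have ne_r1_w : r' ≠ w := hr'n.2.2.2.2.2.1
  have ne_w_r1 : w ≠ r' := ne_r1_w.symm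
  have ne_r1_u : r' ≠ u := hr'n.2.2.2.2.2.2
  have ne_u_r1 : u ≠ r' := ne_r1_u.symm
  have hsub9 : ({a, b, c, p, s, w, u, q', r'} : Finset α) ⊆ X := by
    intro z hz
    simp only [Finset.mem_insert, Finset.mem_singleton] at hz
    rcases hz with rfl|rfl|rfl|rfl|rfl|rfl|rfl|rfl|rfl
    exacts [haX, hbX, hcX, hpX, hsX, hwX, huX, hq'X, hr'X]
  have hc9 : ({a, b, c, p, s, w, u, q', r'} : Finset α).card = 9 := by
    rw [Finset.card_insert_of_notMem (by simp only [Finset.mem_insert, Finset.mem_singleton, not_or]; exact ⟨ne_a_b, ne_a_c, ne_a_p, ne_a_s, ne_a_w, ne_a_u, ne_a_q1, ne_a_r1⟩),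
    Finset.card_insert_of_notMem (by simp only [Finset.mem_insert, Finset.mem_singleton, not_or]; exact ⟨ne_b_c, ne_b_p, ne_b_s, ne_b_w, ne_b_u, ne_b_q1, ne_b_r1⟩),
    Finset.card_insert_of_notMem (by simp only [Finset.mem_insert, Finset.mem_singleton, not_or]; exact ⟨ne_c_p, ne_c_s, ne_c_w, ne_c_u, ne_c_q1, ne_c_r1⟩),
    Finset.card_insert_of_notMem (by simp only [Finset.mem_insert, Finset.mem_singleton, not_or]; exact ⟨ne_p_s, ne_p_w, ne_p_u, ne_p_q1, ne_p_r1⟩),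
    Finset.card_insert_of_notMem (by simp only [Finset.mem_insert, Finset.mem_singleton, not_or]; exact ⟨ne_s_w, ne_s_u, ne_s_q1, ne_s_r1⟩),
    Finset.card_insert_of_notMem (by simp only [Finset.mem_insert, Finset.mem_singleton, not_or]; exact ⟨ne_w_u, ne_w_q1, ne_w_r1⟩),
    Finset.card_insert_of_notMem (by simp only [Finset.mem_insert, Finset.mem_singleton, not_or]; exact ⟨ne_u_q1, ne_u_r1⟩),
    Finset.card_insert_of_notMem (by simp only [Finset.mem_singleton]; exact ne_q1_r1), Finset.card_singleton]
  have hXeq' : X = ({a, b, c, p, s, w, u, q', r'} : Finset α) := (Finset.eq_of_subset_of_card_le hsub9 (by rw [hX, hc9])).symm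
  have hT5base : t p q' = r' := by
    have hh : t p q' ∈ X := hmem p hpX q' hq'X ne_p_q1
    rw [hXeq'] at hh
    simp only [Finset.mem_insert, Finset.mem_singleton] at hh
    rcases hh with h|h|h|h|h|h|h|h|h
    · exfalso
      have hq := hinv p hpX q' hq'X ne_p_q1
      rw [h, f_p_a] at hq
      exact ne_s_q1 hq
    · exfalso
      have hq := hinv p hpX q' hq'X ne_p_q1
      rw [h, f_p_b] at hq
      exact ne_w_q1 hq
    · exfalso
      have hq := hinv p hpX q' hq'X ne_p_q1
      rw [h, f_p_c] at hq
      exact ne_u_q1 hq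
    · exact absurd h (hne1 p hpX q' hq'X ne_p_q1)
    · exfalso
      have hq := hinv p hpX q' hq'X ne_p_q1
      rw [h, f_p_s] at hq
      exact ne_a_q1 hq
    · exfalso
      have hq := hinv p hpX q' hq'X ne_p_q1
      rw [h, f_p_w] at hq
      exact ne_b_q1 hq
    · exfalso
      have hq := hinv p hpX q' hq'X ne_p_q1
      rw [h, f_p_u] at hq
      exact ne_c_q1 hq
    · exact absurd h (hne2 p hpX q' hq'X ne_p_q1)
    · exact h
  have f_p_q1 : t p q' = r' := hT5base
  have f_q1_p : t q' p = r' := by rw [← hsym p hpX q' hq'X ne_p_q1]; exact f_p_q1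
  have f_p_r1 : t p r' = q' := by have hq := hinv p hpX q' hq'X ne_p_q1; rw [f_p_q1] at hq; exact hq
  have f_r1_p : t r' p = q' := by rw [← hsym p hpX r' hr'X ne_p_r1]; exact f_p_r1
  have f_q1_r1 : t q' r' = p := by have hq := hinv q' hq'X p hpX ne_q1_p; rw [f_q1_p] at hq; exact hq
  have f_r1_q1 : t r' q' = p := by rw [← hsym q' hq'X r' hr'X ne_q1_r1]; exact f_q1_r1
  have key : t a q' = w ∨ t a q' = u := by
    have hh : t a q' ∈ X := hmem a haX q' hq'X ne_a_q1
    rw [hXeq'] at hh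
    simp only [Finset.mem_insert, Finset.mem_singleton] at hh
    rcases hh with h|h|h|h|h|h|h|h|h
    · exact absurd h (hne1 a haX q' hq'X ne_a_q1)
    · exfalso
      have hq := hinv a haX q' hq'X ne_a_q1
      rw [h, f_a_b] at hq
      exact ne_c_q1 hq
    · exfalso
      have hq := hinv a haX q' hq'X ne_a_q1
      rw [h, f_a_c] at hq
      exact ne_b_q1 hq
    · exfalso
      have hq := hinv a haX q' hq'X ne_a_q1
      rw [h, f_a_p] at hq
      exact ne_s_q1 hq
    · exfalso
      have hq := hinv a haX q' hq'X ne_a_q1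
      rw [h, f_a_s] at hq
      exact ne_p_q1 hq
    · exact Or.inl h
    · exact Or.inr h
    · exact absurd h (hne2 a haX q' hq'X ne_a_q1)
    · exfalso
      have h1 : t q' a = r' := by rw [← hsym a haX q' hq'X ne_a_q1]; exact h
      have hq := hinv q' hq'X a haX ne_q1_a
      rw [h1, f_q1_r1] at hq
      exact ne_p_a hq
  obtain ⟨q, r, hqX, hrX, ne_q_a, ne_q_b, ne_q_c, ne_q_p, ne_q_s, ne_q_w, ne_q_u, ne_r_a, ne_r_b, ne_r_c, ne_r_p, ne_r_s, ne_r_w, ne_r_u, ne_q_r, hXeq, hT5b, hT6b, hT7b⟩ :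
      ∃ q r, q ∈ X ∧ r ∈ X ∧ q ≠ a ∧ q ≠ b ∧ q ≠ c ∧ q ≠ p ∧ q ≠ s ∧ q ≠ w ∧ q ≠ u ∧ r ≠ a ∧ r ≠ b ∧ r ≠ c ∧ r ≠ p ∧ r ≠ s ∧ r ≠ w ∧ r ≠ u ∧ q ≠ r ∧ X = ({a, b, c, p, s, w, u, q, r} : Finset α) ∧ t p q = r ∧ t a q = w ∧ t a r = u := by
    rcases key with hk | hk
    · -- q := q', r := r'
      have f_a_q1 : t a q' = w := hk
      have f_q1_a : t q' a = w := by rw [← hsym a haX q' hq'X ne_a_q1]; exact f_a_q1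
      have f_a_w : t a w = q' := by have hq := hinv a haX q' hq'X ne_a_q1; rw [f_a_q1] at hq; exact hq
      have f_w_a : t w a = q' := by rw [← hsym a haX w hwX ne_a_w]; exact f_a_w
      have f_q1_w : t q' w = a := by have hq := hinv q' hq'X a haX ne_q1_a; rw [f_q1_a] at hq; exact hq
      have f_w_q1 : t w q' = a := by rw [← hsym q' hq'X w hwX ne_q1_w]; exact f_q1_w
      have hT7b1 : t a r' = u := by
        have hh : t a r' ∈ X := hmem a haX r' hr'X ne_a_r1
        rw [hXeq'] at hh
        simp only [Finset.mem_insert, Finset.mem_singleton] at hh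
        rcases hh with h|h|h|h|h|h|h|h|h
        · exact absurd h (hne1 a haX r' hr'X ne_a_r1)
        · exfalso
          have hq := hinv a haX r' hr'X ne_a_r1
          rw [h, f_a_b] at hq
          exact ne_c_r1 hq
        · exfalso
          have hq := hinv a haX r' hr'X ne_a_r1
          rw [h, f_a_c] at hq
          exact ne_b_r1 hq
        · exfalso
          have hq := hinv a haX r' hr'X ne_a_r1
          rw [h, f_a_p] at hq
          exact ne_s_r1 hq
        · exfalso
          have hq := hinv a haX r' hr'X ne_a_r1
          rw [h, f_a_s] at hq
          exact ne_p_r1 hq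
        · exfalso
          have hq := hinv a haX r' hr'X ne_a_r1
          rw [h, f_a_w] at hq
          exact ne_q1_r1 hq
        · exact h
        · exfalso
          have hq := hinv a haX r' hr'X ne_a_r1
          rw [h, f_a_q1] at hq
          exact ne_w_r1 hq
        · exact absurd h (hne2 a haX r' hr'X ne_a_r1)
      refine ⟨q', r', hq'X, hr'X, ne_q1_a, ne_q1_b, ne_q1_c, ne_q1_p, ne_q1_s, ne_q1_w, ne_q1_u, ne_r1_a, ne_r1_b, ne_r1_c, ne_r1_p, ne_r1_s, ne_r1_w, ne_r1_u, ne_q1_r1, ?_, hT5base, hk, hT7b1⟩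
      exact hXeq'
    · -- q := r', r := q'
      have f_a_q1 : t a q' = u := hk
      have f_q1_a : t q' a = u := by rw [← hsym a haX q' hq'X ne_a_q1]; exact f_a_q1
      have f_a_u : t a u = q' := by have hq := hinv a haX q' hq'X ne_a_q1; rw [f_a_q1] at hq; exact hq
      have f_u_a : t u a = q' := by rw [← hsym a haX u huX ne_a_u]; exact f_a_u
      have f_q1_u : t q' u = a := by have hq := hinv q' hq'X a haX ne_q1_a; rw [f_q1_a] at hq; exact hq
      have f_u_q1 : t u q' = a := by rw [← hsym q' hq'X u huX ne_q1_u]; exact f_q1_u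
      have hT6b2 : t a r' = w := by
        have hh : t a r' ∈ X := hmem a haX r' hr'X ne_a_r1
        rw [hXeq'] at hh
        simp only [Finset.mem_insert, Finset.mem_singleton] at hh
        rcases hh with h|h|h|h|h|h|h|h|h
        · exact absurd h (hne1 a haX r' hr'X ne_a_r1)
        · exfalso
          have hq := hinv a haX r' hr'X ne_a_r1
          rw [h, f_a_b] at hq
          exact ne_c_r1 hq
        · exfalso
          have hq := hinv a haX r' hr'X ne_a_r1
          rw [h, f_a_c] at hq
          exact ne_b_r1 hq
        · exfalso
          have hq := hinv a haX r' hr'X ne_a_r1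
          rw [h, f_a_p] at hq
          exact ne_s_r1 hq
        · exfalso
          have hq := hinv a haX r' hr'X ne_a_r1
          rw [h, f_a_s] at hq
          exact ne_p_r1 hq
        · exact h
        · exfalso
          have hq := hinv a haX r' hr'X ne_a_r1
          rw [h, f_a_u] at hq
          exact ne_q1_r1 hq
        · exfalso
          have hq := hinv a haX r' hr'X ne_a_r1
          rw [h, f_a_q1] at hq
          exact ne_u_r1 hq
        · exact absurd h (hne2 a haX r' hr'X ne_a_r1)
      refine ⟨r', q', hr'X, hq'X, ne_r1_a, ne_r1_b, ne_r1_c, ne_r1_p, ne_r1_s, ne_r1_w, ne_r1_u, ne_q1_a, ne_q1_b, ne_q1_c, ne_q1_p, ne_q1_s, ne_q1_w, ne_q1_u, ne_r1_q1, ?_, f_p_r1, hT6b2, hk⟩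
      rw [hXeq', Finset.pair_comm q' r']
  have ne_a_q : a ≠ q := ne_q_a.symm
  have ne_a_r : a ≠ r := ne_r_a.symm
  have ne_b_q : b ≠ q := ne_q_b.symm
  have ne_b_r : b ≠ r := ne_r_b.symm
  have ne_c_q : c ≠ q := ne_q_c.symm
  have ne_c_r : c ≠ r := ne_r_c.symm
  have ne_p_q : p ≠ q := ne_q_p.symm
  have ne_p_r : p ≠ r := ne_r_p.symm
  have ne_s_q : s ≠ q := ne_q_s.symm
  have ne_s_r : s ≠ r := ne_r_s.symm
  have ne_w_q : w ≠ q := ne_q_w.symm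
  have ne_w_r : w ≠ r := ne_r_w.symm
  have ne_u_q : u ≠ q := ne_q_u.symm
  have ne_u_r : u ≠ r := ne_r_u.symm
  have ne_r_q : r ≠ q := ne_q_r.symm
  have f_p_q : t p q = r := hT5b
  have f_q_p : t q p = r := by rw [← hsym p hpX q hqX ne_p_q]; exact f_p_q
  have f_p_r : t p r = q := by have hq := hinv p hpX q hqX ne_p_q; rw [f_p_q] at hq; exact hq
  have f_r_p : t r p = q := by rw [← hsym p hpX r hrX ne_p_r]; exact f_p_r
  have f_q_r : t q r = p := by have hq := hinv q hqX p hpX ne_q_p; rw [f_q_p] at hq; exact hq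
  have f_r_q : t r q = p := by rw [← hsym q hqX r hrX ne_q_r]; exact f_q_r
  have f_a_q : t a q = w := hT6b
  have f_q_a : t q a = w := by rw [← hsym a haX q hqX ne_a_q]; exact f_a_q
  have f_a_w : t a w = q := by have hq := hinv a haX q hqX ne_a_q; rw [f_a_q] at hq; exact hq
  have f_w_a : t w a = q := by rw [← hsym a haX w hwX ne_a_w]; exact f_a_w
  have f_q_w : t q w = a := by have hq := hinv q hqX a haX ne_q_a; rw [f_q_a] at hq; exact hq
  have f_w_q : t w q = a := by rw [← hsym q hqX w hwX ne_q_w]; exact f_q_w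
  have f_a_r : t a r = u := hT7b
  have f_r_a : t r a = u := by rw [← hsym a haX r hrX ne_a_r]; exact f_a_r
  have f_a_u : t a u = r := by have hq := hinv a haX r hrX ne_a_r; rw [f_a_r] at hq; exact hq
  have f_u_a : t u a = r := by rw [← hsym a haX u huX ne_a_u]; exact f_a_u
  have f_r_u : t r u = a := by have hq := hinv r hrX a haX ne_r_a; rw [f_r_a] at hq; exact hq
  have f_u_r : t u r = a := by rw [← hsym r hrX u huX ne_r_u]; exact f_r_u
  have hD1 : t b q = u := by
    have hh : t b q ∈ X := hmem b hbX q hqX ne_b_q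
    rw [hXeq] at hh
    simp only [Finset.mem_insert, Finset.mem_singleton] at hh
    rcases hh with h|h|h|h|h|h|h|h|h
    · exfalso
      have hq := hinv b hbX q hqX ne_b_q
      rw [h, f_b_a] at hq
      exact ne_c_q hq
    · exact absurd h (hne1 b hbX q hqX ne_b_q)
    · exfalso
      have hq := hinv b hbX q hqX ne_b_q
      rw [h, f_b_c] at hq
      exact ne_a_q hq
    · exfalso
      have hq := hinv b hbX q hqX ne_b_q
      rw [h, f_b_p] at hq
      exact ne_w_q hq
    · -- the hard case: t b q = s leads to contradiction
      exfalso
      have hqb : t q b = s := by rw [← hsym b hbX q hqX ne_b_q]; exact h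
      have hqs : t q s = b := by have hq2 := hinv q hqX b hbX ne_q_b; rw [hqb] at hq2; exact hq2
      have hqu : t q u = c := by
        have hh2 : t q u ∈ X := hmem q hqX u huX ne_q_u
        rw [hXeq] at hh2
        simp only [Finset.mem_insert, Finset.mem_singleton] at hh2
        rcases hh2 with h2|h2|h2|h2|h2|h2|h2|h2|h2
        · exfalso
          have hq2 := hinv q hqX u huX ne_q_u
          rw [h2, f_q_a] at hq2
          exact ne_w_u hq2
        · exfalso
          have hq2 := hinv q hqX u huX ne_q_u
          rw [h2, hqb] at hq2
          exact ne_s_u hq2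
        · exact h2
        · exfalso
          have hq2 := hinv q hqX u huX ne_q_u
          rw [h2, f_q_p] at hq2
          exact ne_r_u hq2
        · exfalso
          have hq2 := hinv q hqX u huX ne_q_u
          rw [h2, hqs] at hq2
          exact ne_b_u hq2
        · exfalso
          have hq2 := hinv q hqX u huX ne_q_u
          rw [h2, f_q_w] at hq2
          exact ne_a_u hq2
        · exact absurd h2 (hne2 q hqX u huX ne_q_u)
        · exact absurd h2 (hne1 q hqX u huX ne_q_u)
        · exfalso
          have hq2 := hinv q hqX u huX ne_q_u
          rw [h2, f_q_r] at hq2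
          exact ne_p_u hq2
      have huq : t u q = c := by rw [← hsym q hqX u huX ne_q_u]; exact hqu
      have huc : t u c = q := by have hq2 := hinv u huX q hqX ne_u_q; rw [huq] at hq2; exact hq2
      have hcu : t c u = q := by rw [hsym c hcX u huX ne_c_u]; exact huc
      rw [f_c_u] at hcu
      exact ne_p_q hcu
    · exfalso
      have hq := hinv b hbX q hqX ne_b_q
      rw [h, f_b_w] at hq
      exact ne_p_q hq
    · exact h
    · exact absurd h (hne2 b hbX q hqX ne_b_q)
    · exfalso
      have h1 : t q b = r := by rw [← hsym b hbX q hqX ne_b_q]; exact h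
      have hq := hinv q hqX b hbX ne_q_b
      rw [h1, f_q_r] at hq
      exact ne_p_b hq
  have f_b_q : t b q = u := hD1
  have f_q_b : t q b = u := by rw [← hsym b hbX q hqX ne_b_q]; exact f_b_q
  have f_b_u : t b u = q := by have hq := hinv b hbX q hqX ne_b_q; rw [f_b_q] at hq; exact hq
  have f_u_b : t u b = q := by rw [← hsym b hbX u huX ne_b_u]; exact f_b_u
  have f_q_u : t q u = b := by have hq := hinv q hqX b hbX ne_q_b; rw [f_q_b] at hq; exact hq
  have f_u_q : t u q = b := by rw [← hsym q hqX u huX ne_q_u]; exact f_q_u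
  have hD2 : t b r = s := by
    have hh : t b r ∈ X := hmem b hbX r hrX ne_b_r
    rw [hXeq] at hh
    simp only [Finset.mem_insert, Finset.mem_singleton] at hh
    rcases hh with h|h|h|h|h|h|h|h|h
    · exfalso
      have hq := hinv b hbX r hrX ne_b_r
      rw [h, f_b_a] at hq
      exact ne_c_r hq
    · exact absurd h (hne1 b hbX r hrX ne_b_r)
    · exfalso
      have hq := hinv b hbX r hrX ne_b_r
      rw [h, f_b_c] at hq
      exact ne_a_r hq
    · exfalso
      have hq := hinv b hbX r hrX ne_b_r
      rw [h, f_b_p] at hq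
      exact ne_w_r hq
    · exact h
    · exfalso
      have hq := hinv b hbX r hrX ne_b_r
      rw [h, f_b_w] at hq
      exact ne_p_r hq
    · exfalso
      have hq := hinv b hbX r hrX ne_b_r
      rw [h, f_b_u] at hq
      exact ne_q_r hq
    · exfalso
      have hq := hinv b hbX r hrX ne_b_r
      rw [h, f_b_q] at hq
      exact ne_u_r hq
    · exact absurd h (hne2 b hbX r hrX ne_b_r)
  have f_b_r : t b r = s := hD2
  have f_r_b : t r b = s := by rw [← hsym b hbX r hrX ne_b_r]; exact f_b_r
  have f_b_s : t b s = r := by have hq := hinv b hbX r hrX ne_b_r; rw [f_b_r] at hq; exact hq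
  have f_s_b : t s b = r := by rw [← hsym b hbX s hsX ne_b_s]; exact f_b_s
  have f_r_s : t r s = b := by have hq := hinv r hrX b hbX ne_r_b; rw [f_r_b] at hq; exact hq
  have f_s_r : t s r = b := by rw [← hsym r hrX s hsX ne_r_s]; exact f_r_s
  have hD3 : t c q = s := by
    have hh : t c q ∈ X := hmem c hcX q hqX ne_c_q
    rw [hXeq] at hh
    simp only [Finset.mem_insert, Finset.mem_singleton] at hh
    rcases hh with h|h|h|h|h|h|h|h|h
    · exfalso
      have hq := hinv c hcX q hqX ne_c_q
      rw [h, f_c_a] at hq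
      exact ne_b_q hq
    · exfalso
      have hq := hinv c hcX q hqX ne_c_q
      rw [h, f_c_b] at hq
      exact ne_a_q hq
    · exact absurd h (hne1 c hcX q hqX ne_c_q)
    · exfalso
      have hq := hinv c hcX q hqX ne_c_q
      rw [h, f_c_p] at hq
      exact ne_u_q hq
    · exact h
    · exfalso
      have h1 : t q c = w := by rw [← hsym c hcX q hqX ne_c_q]; exact h
      have hq := hinv q hqX c hcX ne_q_c
      rw [h1, f_q_w] at hq
      exact ne_a_c hq
    · exfalso
      have hq := hinv c hcX q hqX ne_c_q
      rw [h, f_c_u] at hq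
      exact ne_p_q hq
    · exact absurd h (hne2 c hcX q hqX ne_c_q)
    · exfalso
      have h1 : t q c = r := by rw [← hsym c hcX q hqX ne_c_q]; exact h
      have hq := hinv q hqX c hcX ne_q_c
      rw [h1, f_q_r] at hq
      exact ne_p_c hq
  have f_c_q : t c q = s := hD3
  have f_q_c : t q c = s := by rw [← hsym c hcX q hqX ne_c_q]; exact f_c_q
  have f_c_s : t c s = q := by have hq := hinv c hcX q hqX ne_c_q; rw [f_c_q] at hq; exact hq
  have f_s_c : t s c = q := by rw [← hsym c hcX s hsX ne_c_s]; exact f_c_s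
  have f_q_s : t q s = c := by have hq := hinv q hqX c hcX ne_q_c; rw [f_q_c] at hq; exact hq
  have f_s_q : t s q = c := by rw [← hsym q hqX s hsX ne_q_s]; exact f_q_s
  have hD4 : t c r = w := by
    have hh : t c r ∈ X := hmem c hcX r hrX ne_c_r
    rw [hXeq] at hh
    simp only [Finset.mem_insert, Finset.mem_singleton] at hh
    rcases hh with h|h|h|h|h|h|h|h|h
    · exfalso
      have hq := hinv c hcX r hrX ne_c_r
      rw [h, f_c_a] at hq
      exact ne_b_r hq
    · exfalso
      have hq := hinv c hcX r hrX ne_c_r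
      rw [h, f_c_b] at hq
      exact ne_a_r hq
    · exact absurd h (hne1 c hcX r hrX ne_c_r)
    · exfalso
      have hq := hinv c hcX r hrX ne_c_r
      rw [h, f_c_p] at hq
      exact ne_u_r hq
    · exfalso
      have hq := hinv c hcX r hrX ne_c_r
      rw [h, f_c_s] at hq
      exact ne_q_r hq
    · exact h
    · exfalso
      have hq := hinv c hcX r hrX ne_c_r
      rw [h, f_c_u] at hq
      exact ne_p_r hq
    · exfalso
      have hq := hinv c hcX r hrX ne_c_r
      rw [h, f_c_q] at hq
      exact ne_s_r hq
    · exact absurd h (hne2 c hcX r hrX ne_c_r)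
  have f_c_r : t c r = w := hD4
  have f_r_c : t r c = w := by rw [← hsym c hcX r hrX ne_c_r]; exact f_c_r
  have f_c_w : t c w = r := by have hq := hinv c hcX r hrX ne_c_r; rw [f_c_r] at hq; exact hq
  have f_w_c : t w c = r := by rw [← hsym c hcX w hwX ne_c_w]; exact f_c_w
  have f_r_w : t r w = c := by have hq := hinv r hrX c hcX ne_r_c; rw [f_r_c] at hq; exact hq
  have f_w_r : t w r = c := by rw [← hsym r hrX w hwX ne_r_w]; exact f_r_w
  have hD5 : t s u = w := by
    have hh : t s u ∈ X := hmem s hsX u huX ne_s_u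
    rw [hXeq] at hh
    simp only [Finset.mem_insert, Finset.mem_singleton] at hh
    rcases hh with h|h|h|h|h|h|h|h|h
    · exfalso
      have hq := hinv s hsX u huX ne_s_u
      rw [h, f_s_a] at hq
      exact ne_p_u hq
    · exfalso
      have hq := hinv s hsX u huX ne_s_u
      rw [h, f_s_b] at hq
      exact ne_r_u hq
    · exfalso
      have hq := hinv s hsX u huX ne_s_u
      rw [h, f_s_c] at hq
      exact ne_q_u hq
    · exfalso
      have hq := hinv s hsX u huX ne_s_u
      rw [h, f_s_p] at hq
      exact ne_a_u hq
    · exact absurd h (hne1 s hsX u huX ne_s_u)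
    · exact h
    · exact absurd h (hne2 s hsX u huX ne_s_u)
    · exfalso
      have hq := hinv s hsX u huX ne_s_u
      rw [h, f_s_q] at hq
      exact ne_c_u hq
    · exfalso
      have hq := hinv s hsX u huX ne_s_u
      rw [h, f_s_r] at hq
      exact ne_b_u hq
  have f_s_u : t s u = w := hD5
  have f_u_s : t u s = w := by rw [← hsym s hsX u huX ne_s_u]; exact f_s_u
  have f_s_w : t s w = u := by have hq := hinv s hsX u huX ne_s_u; rw [f_s_u] at hq; exact hq
  have f_w_s : t w s = u := by rw [← hsym s hsX w hwX ne_s_w]; exact f_s_w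
  have f_u_w : t u w = s := by have hq := hinv u huX s hsX ne_u_s; rw [f_u_s] at hq; exact hq
  have f_w_u : t w u = s := by rw [← hsym u huX w hwX ne_u_w]; exact f_u_w
  classical
  set φ : α → ZMod 3 × ZMod 3 := fun x => if x = a then ((0 : ZMod 3), (0 : ZMod 3)) else if x = b then ((1 : ZMod 3), (0 : ZMod 3)) else if x = c then ((2 : ZMod 3), (0 : ZMod 3)) else if x = p then ((0 : ZMod 3), (1 : ZMod 3)) else if x = s then ((0 : ZMod 3), (2 : ZMod 3)) else if x = w then ((2 : ZMod 3), (2 : ZMod 3)) else if x = u then ((1 : ZMod 3), (2 : ZMod 3)) else if x = q then ((1 : ZMod 3), (1 : ZMod 3)) else ((2 : ZMod 3), (1 : ZMod 3)) with hphi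
  have e_a : φ a = ((0 : ZMod 3), (0 : ZMod 3)) := by simp [hphi]
  have e_b : φ b = ((1 : ZMod 3), (0 : ZMod 3)) := by simp [hphi, ne_b_a]
  have e_c : φ c = ((2 : ZMod 3), (0 : ZMod 3)) := by simp [hphi, ne_c_a, ne_c_b]
  have e_p : φ p = ((0 : ZMod 3), (1 : ZMod 3)) := by simp [hphi, ne_p_a, ne_p_b, ne_p_c]
  have e_s : φ s = ((0 : ZMod 3), (2 : ZMod 3)) := by simp [hphi, ne_s_a, ne_s_b, ne_s_c, ne_s_p]
  have e_w : φ w = ((2 : ZMod 3), (2 : ZMod 3)) := by simp [hphi, ne_w_a, ne_w_b, ne_w_c, ne_w_p, ne_w_s]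
  have e_u : φ u = ((1 : ZMod 3), (2 : ZMod 3)) := by simp [hphi, ne_u_a, ne_u_b, ne_u_c, ne_u_p, ne_u_s, ne_u_w]
  have e_q : φ q = ((1 : ZMod 3), (1 : ZMod 3)) := by simp [hphi, ne_q_a, ne_q_b, ne_q_c, ne_q_p, ne_q_s, ne_q_w, ne_q_u]
  have e_r : φ r = ((2 : ZMod 3), (1 : ZMod 3)) := by simp [hphi, ne_r_a, ne_r_b, ne_r_c, ne_r_p, ne_r_s, ne_r_w, ne_r_u, ne_r_q]
  refine ⟨φ, ⟨fun x _ => Set.mem_univ _, ?_, ?_⟩, ?_⟩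
  · intro x hx y hy hfe
    have hx' : x ∈ X := hx
    have hy' : y ∈ X := hy
    rw [hXeq] at hx' hy'
    simp only [Finset.mem_insert, Finset.mem_singleton] at hx' hy'
    rcases hx' with rfl|rfl|rfl|rfl|rfl|rfl|rfl|rfl|rfl
    · rcases hy' with rfl|rfl|rfl|rfl|rfl|rfl|rfl|rfl|rfl
      · rfl
      · exfalso; rw [e_a, e_b] at hfe; exact absurd hfe (by decide)
      · exfalso; rw [e_a, e_c] at hfe; exact absurd hfe (by decide)
      · exfalso; rw [e_a, e_p] at hfe; exact absurd hfe (by decide)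
      · exfalso; rw [e_a, e_s] at hfe; exact absurd hfe (by decide)
      · exfalso; rw [e_a, e_w] at hfe; exact absurd hfe (by decide)
      · exfalso; rw [e_a, e_u] at hfe; exact absurd hfe (by decide)
      · exfalso; rw [e_a, e_q] at hfe; exact absurd hfe (by decide)
      · exfalso; rw [e_a, e_r] at hfe; exact absurd hfe (by decide)
    · rcases hy' with rfl|rfl|rfl|rfl|rfl|rfl|rfl|rfl|rfl
      · exfalso; rw [e_b, e_a] at hfe; exact absurd hfe (by decide)
      · rfl
      · exfalso; rw [e_b, e_c] at hfe; exact absurd hfe (by decide)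
      · exfalso; rw [e_b, e_p] at hfe; exact absurd hfe (by decide)
      · exfalso; rw [e_b, e_s] at hfe; exact absurd hfe (by decide)
      · exfalso; rw [e_b, e_w] at hfe; exact absurd hfe (by decide)
      · exfalso; rw [e_b, e_u] at hfe; exact absurd hfe (by decide)
      · exfalso; rw [e_b, e_q] at hfe; exact absurd hfe (by decide)
      · exfalso; rw [e_b, e_r] at hfe; exact absurd hfe (by decide)
    · rcases hy' with rfl|rfl|rfl|rfl|rfl|rfl|rfl|rfl|rfl
      · exfalso; rw [e_c, e_a] at hfe; exact absurd hfe (by decide)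
      · exfalso; rw [e_c, e_b] at hfe; exact absurd hfe (by decide)
      · rfl
      · exfalso; rw [e_c, e_p] at hfe; exact absurd hfe (by decide)
      · exfalso; rw [e_c, e_s] at hfe; exact absurd hfe (by decide)
      · exfalso; rw [e_c, e_w] at hfe; exact absurd hfe (by decide)
      · exfalso; rw [e_c, e_u] at hfe; exact absurd hfe (by decide)
      · exfalso; rw [e_c, e_q] at hfe; exact absurd hfe (by decide)
      · exfalso; rw [e_c, e_r] at hfe; exact absurd hfe (by decide)
    · rcases hy' with rfl|rfl|rfl|rfl|rfl|rfl|rfl|rfl|rfl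
      · exfalso; rw [e_p, e_a] at hfe; exact absurd hfe (by decide)
      · exfalso; rw [e_p, e_b] at hfe; exact absurd hfe (by decide)
      · exfalso; rw [e_p, e_c] at hfe; exact absurd hfe (by decide)
      · rfl
      · exfalso; rw [e_p, e_s] at hfe; exact absurd hfe (by decide)
      · exfalso; rw [e_p, e_w] at hfe; exact absurd hfe (by decide)
      · exfalso; rw [e_p, e_u] at hfe; exact absurd hfe (by decide)
      · exfalso; rw [e_p, e_q] at hfe; exact absurd hfe (by decide)
      · exfalso; rw [e_p, e_r] at hfe; exact absurd hfe (by decide)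
    · rcases hy' with rfl|rfl|rfl|rfl|rfl|rfl|rfl|rfl|rfl
      · exfalso; rw [e_s, e_a] at hfe; exact absurd hfe (by decide)
      · exfalso; rw [e_s, e_b] at hfe; exact absurd hfe (by decide)
      · exfalso; rw [e_s, e_c] at hfe; exact absurd hfe (by decide)
      · exfalso; rw [e_s, e_p] at hfe; exact absurd hfe (by decide)
      · rfl
      · exfalso; rw [e_s, e_w] at hfe; exact absurd hfe (by decide)
      · exfalso; rw [e_s, e_u] at hfe; exact absurd hfe (by decide)
      · exfalso; rw [e_s, e_q] at hfe; exact absurd hfe (by decide)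
      · exfalso; rw [e_s, e_r] at hfe; exact absurd hfe (by decide)
    · rcases hy' with rfl|rfl|rfl|rfl|rfl|rfl|rfl|rfl|rfl
      · exfalso; rw [e_w, e_a] at hfe; exact absurd hfe (by decide)
      · exfalso; rw [e_w, e_b] at hfe; exact absurd hfe (by decide)
      · exfalso; rw [e_w, e_c] at hfe; exact absurd hfe (by decide)
      · exfalso; rw [e_w, e_p] at hfe; exact absurd hfe (by decide)
      · exfalso; rw [e_w, e_s] at hfe; exact absurd hfe (by decide)
      · rfl
      · exfalso; rw [e_w, e_u] at hfe; exact absurd hfe (by decide)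
      · exfalso; rw [e_w, e_q] at hfe; exact absurd hfe (by decide)
      · exfalso; rw [e_w, e_r] at hfe; exact absurd hfe (by decide)
    · rcases hy' with rfl|rfl|rfl|rfl|rfl|rfl|rfl|rfl|rfl
      · exfalso; rw [e_u, e_a] at hfe; exact absurd hfe (by decide)
      · exfalso; rw [e_u, e_b] at hfe; exact absurd hfe (by decide)
      · exfalso; rw [e_u, e_c] at hfe; exact absurd hfe (by decide)
      · exfalso; rw [e_u, e_p] at hfe; exact absurd hfe (by decide)
      · exfalso; rw [e_u, e_s] at hfe; exact absurd hfe (by decide)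
      · exfalso; rw [e_u, e_w] at hfe; exact absurd hfe (by decide)
      · rfl
      · exfalso; rw [e_u, e_q] at hfe; exact absurd hfe (by decide)
      · exfalso; rw [e_u, e_r] at hfe; exact absurd hfe (by decide)
    · rcases hy' with rfl|rfl|rfl|rfl|rfl|rfl|rfl|rfl|rfl
      · exfalso; rw [e_q, e_a] at hfe; exact absurd hfe (by decide)
      · exfalso; rw [e_q, e_b] at hfe; exact absurd hfe (by decide)
      · exfalso; rw [e_q, e_c] at hfe; exact absurd hfe (by decide)
      · exfalso; rw [e_q, e_p] at hfe; exact absurd hfe (by decide)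
      · exfalso; rw [e_q, e_s] at hfe; exact absurd hfe (by decide)
      · exfalso; rw [e_q, e_w] at hfe; exact absurd hfe (by decide)
      · exfalso; rw [e_q, e_u] at hfe; exact absurd hfe (by decide)
      · rfl
      · exfalso; rw [e_q, e_r] at hfe; exact absurd hfe (by decide)
    · rcases hy' with rfl|rfl|rfl|rfl|rfl|rfl|rfl|rfl|rfl
      · exfalso; rw [e_r, e_a] at hfe; exact absurd hfe (by decide)
      · exfalso; rw [e_r, e_b] at hfe; exact absurd hfe (by decide)
      · exfalso; rw [e_r, e_c] at hfe; exact absurd hfe (by decide)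
      · exfalso; rw [e_r, e_p] at hfe; exact absurd hfe (by decide)
      · exfalso; rw [e_r, e_s] at hfe; exact absurd hfe (by decide)
      · exfalso; rw [e_r, e_w] at hfe; exact absurd hfe (by decide)
      · exfalso; rw [e_r, e_u] at hfe; exact absurd hfe (by decide)
      · exfalso; rw [e_r, e_q] at hfe; exact absurd hfe (by decide)
      · rfl
  · intro v _
    have hv : ∀ z : ZMod 3 × ZMod 3, z = ((0 : ZMod 3), (0 : ZMod 3)) ∨ z = ((1 : ZMod 3), (0 : ZMod 3)) ∨ z = ((2 : ZMod 3), (0 : ZMod 3)) ∨ z = ((0 : ZMod 3), (1 : ZMod 3)) ∨ z = ((1 : ZMod 3), (1 : ZMod 3)) ∨ z = ((2 : ZMod 3), (1 : ZMod 3)) ∨ z = ((0 : ZMod 3), (2 : ZMod 3)) ∨ z = ((1 : ZMod 3), (2 : ZMod 3)) ∨ z = ((2 : ZMod 3), (2 : ZMod 3)) := by decide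
    rcases hv v with rfl|rfl|rfl|rfl|rfl|rfl|rfl|rfl|rfl
    · exact ⟨a, Finset.mem_coe.mpr (by rw [hXeq]; simp), e_a⟩
    · exact ⟨b, Finset.mem_coe.mpr (by rw [hXeq]; simp), e_b⟩
    · exact ⟨c, Finset.mem_coe.mpr (by rw [hXeq]; simp), e_c⟩
    · exact ⟨p, Finset.mem_coe.mpr (by rw [hXeq]; simp), e_p⟩
    · exact ⟨q, Finset.mem_coe.mpr (by rw [hXeq]; simp), e_q⟩
    · exact ⟨r, Finset.mem_coe.mpr (by rw [hXeq]; simp), e_r⟩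
    · exact ⟨s, Finset.mem_coe.mpr (by rw [hXeq]; simp), e_s⟩
    · exact ⟨u, Finset.mem_coe.mpr (by rw [hXeq]; simp), e_u⟩
    · exact ⟨w, Finset.mem_coe.mpr (by rw [hXeq]; simp), e_w⟩
  · intro x hx y hy hxy
    rw [hXeq] at hx hy
    simp only [Finset.mem_insert, Finset.mem_singleton] at hx hy
    rcases hx with rfl|rfl|rfl|rfl|rfl|rfl|rfl|rfl|rfl
    · rcases hy with rfl|rfl|rfl|rfl|rfl|rfl|rfl|rfl|rfl
      · exact absurd rfl hxy
      · rw [f_a_b, e_c, e_a, e_b]; decide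
      · rw [f_a_c, e_b, e_a, e_c]; decide
      · rw [f_a_p, e_s, e_a, e_p]; decide
      · rw [f_a_s, e_p, e_a, e_s]; decide
      · rw [f_a_w, e_q, e_a, e_w]; decide
      · rw [f_a_u, e_r, e_a, e_u]; decide
      · rw [f_a_q, e_w, e_a, e_q]; decide
      · rw [f_a_r, e_u, e_a, e_r]; decide
    · rcases hy with rfl|rfl|rfl|rfl|rfl|rfl|rfl|rfl|rfl
      · rw [f_b_a, e_c, e_b, e_a]; decide
      · exact absurd rfl hxy
      · rw [f_b_c, e_a, e_b, e_c]; decide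
      · rw [f_b_p, e_w, e_b, e_p]; decide
      · rw [f_b_s, e_r, e_b, e_s]; decide
      · rw [f_b_w, e_p, e_b, e_w]; decide
      · rw [f_b_u, e_q, e_b, e_u]; decide
      · rw [f_b_q, e_u, e_b, e_q]; decide
      · rw [f_b_r, e_s, e_b, e_r]; decide
    · rcases hy with rfl|rfl|rfl|rfl|rfl|rfl|rfl|rfl|rfl
      · rw [f_c_a, e_b, e_c, e_a]; decide
      · rw [f_c_b, e_a, e_c, e_b]; decide
      · exact absurd rfl hxy
      · rw [f_c_p, e_u, e_c, e_p]; decide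
      · rw [f_c_s, e_q, e_c, e_s]; decide
      · rw [f_c_w, e_r, e_c, e_w]; decide
      · rw [f_c_u, e_p, e_c, e_u]; decide
      · rw [f_c_q, e_s, e_c, e_q]; decide
      · rw [f_c_r, e_w, e_c, e_r]; decide
    · rcases hy with rfl|rfl|rfl|rfl|rfl|rfl|rfl|rfl|rfl
      · rw [f_p_a, e_s, e_p, e_a]; decide
      · rw [f_p_b, e_w, e_p, e_b]; decide
      · rw [f_p_c, e_u, e_p, e_c]; decide
      · exact absurd rfl hxy
      · rw [f_p_s, e_a, e_p, e_s]; decide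
      · rw [f_p_w, e_b, e_p, e_w]; decide
      · rw [f_p_u, e_c, e_p, e_u]; decide
      · rw [f_p_q, e_r, e_p, e_q]; decide
      · rw [f_p_r, e_q, e_p, e_r]; decide
    · rcases hy with rfl|rfl|rfl|rfl|rfl|rfl|rfl|rfl|rfl
      · rw [f_s_a, e_p, e_s, e_a]; decide
      · rw [f_s_b, e_r, e_s, e_b]; decide
      · rw [f_s_c, e_q, e_s, e_c]; decide
      · rw [f_s_p, e_a, e_s, e_p]; decide
      · exact absurd rfl hxy
      · rw [f_s_w, e_u, e_s, e_w]; decide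
      · rw [f_s_u, e_w, e_s, e_u]; decide
      · rw [f_s_q, e_c, e_s, e_q]; decide
      · rw [f_s_r, e_b, e_s, e_r]; decide
    · rcases hy with rfl|rfl|rfl|rfl|rfl|rfl|rfl|rfl|rfl
      · rw [f_w_a, e_q, e_w, e_a]; decide
      · rw [f_w_b, e_p, e_w, e_b]; decide
      · rw [f_w_c, e_r, e_w, e_c]; decide
      · rw [f_w_p, e_b, e_w, e_p]; decide
      · rw [f_w_s, e_u, e_w, e_s]; decide
      · exact absurd rfl hxy
      · rw [f_w_u, e_s, e_w, e_u]; decide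
      · rw [f_w_q, e_a, e_w, e_q]; decide
      · rw [f_w_r, e_c, e_w, e_r]; decide
    · rcases hy with rfl|rfl|rfl|rfl|rfl|rfl|rfl|rfl|rfl
      · rw [f_u_a, e_r, e_u, e_a]; decide
      · rw [f_u_b, e_q, e_u, e_b]; decide
      · rw [f_u_c, e_p, e_u, e_c]; decide
      · rw [f_u_p, e_c, e_u, e_p]; decide
      · rw [f_u_s, e_w, e_u, e_s]; decide
      · rw [f_u_w, e_s, e_u, e_w]; decide
      · exact absurd rfl hxy
      · rw [f_u_q, e_b, e_u, e_q]; decide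
      · rw [f_u_r, e_a, e_u, e_r]; decide
    · rcases hy with rfl|rfl|rfl|rfl|rfl|rfl|rfl|rfl|rfl
      · rw [f_q_a, e_w, e_q, e_a]; decide
      · rw [f_q_b, e_u, e_q, e_b]; decide
      · rw [f_q_c, e_s, e_q, e_c]; decide
      · rw [f_q_p, e_r, e_q, e_p]; decide
      · rw [f_q_s, e_c, e_q, e_s]; decide
      · rw [f_q_w, e_a, e_q, e_w]; decide
      · rw [f_q_u, e_b, e_q, e_u]; decide
      · exact absurd rfl hxy
      · rw [f_q_r, e_p, e_q, e_r]; decide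
    · rcases hy with rfl|rfl|rfl|rfl|rfl|rfl|rfl|rfl|rfl
      · rw [f_r_a, e_u, e_r, e_a]; decide
      · rw [f_r_b, e_s, e_r, e_b]; decide
      · rw [f_r_c, e_w, e_r, e_c]; decide
      · rw [f_r_p, e_q, e_r, e_p]; decide
      · rw [f_r_s, e_b, e_r, e_s]; decide
      · rw [f_r_w, e_c, e_r, e_w]; decide
      · rw [f_r_u, e_a, e_r, e_u]; decide
      · rw [f_r_q, e_p, e_r, e_q]; decide
      · exact absurd rfl hxy


lemma triple_iff (A : Finset (Set ProjPlane)) (hAlines : ∀ L ∈ A, IsProjLine L)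
    (hAcard : A.card = 9)
    (hAmult : ∀ p : ProjPlane, IsMultPoint A p → mult A p = 3) :
    ∃ φ : Set ProjPlane → ZMod 3 × ZMod 3, Set.BijOn φ ↑A Set.univ ∧
      ∀ L₁ ∈ A, ∀ L₂ ∈ A, ∀ L₃ ∈ A, L₁ ≠ L₂ → L₁ ≠ L₃ → L₂ ≠ L₃ →
        ((∃ p : ProjPlane, p ∈ L₁ ∧ p ∈ L₂ ∧ p ∈ L₃) ↔ φ L₁ + φ L₂ + φ L₃ = 0) := by
  obtain ⟨t, hbasic, hsym, hinv, hthru, hconc⟩ := arr_t A hAlines hAmult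
  obtain ⟨φ, hbij, hφ⟩ := sts9 A hAcard t
    (fun x hx y hy hxy => (hbasic x hx y hy hxy).1)
    (fun x hx y hy hxy => (hbasic x hx y hy hxy).2.1)
    (fun x hx y hy hxy => (hbasic x hx y hy hxy).2.2)
    hsym hinv
  refine ⟨φ, hbij, ?_⟩
  intro L₁ h1 L₂ h2 L₃ h3 h12 h13 h23
  constructor
  · rintro ⟨p, hp1, hp2, hp3⟩
    have ht : t L₁ L₂ = L₃ := hconc L₁ h1 L₂ h2 L₃ h3 h12 h13.symm h23.symm ⟨p, hp1, hp2, hp3⟩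
    have hphi := hφ L₁ h1 L₂ h2 h12
    rw [ht] at hphi
    rw [hphi]
    exact add_neg_cancel _
  · intro hsum
    have hphi := hφ L₁ h1 L₂ h2 h12
    have hL3 : φ L₃ = -(φ L₁ + φ L₂) := eq_neg_of_add_eq_zero_right hsum
    have hmem3 : t L₁ L₂ ∈ A := (hbasic L₁ h1 L₂ h2 h12).1
    have heq : t L₁ L₂ = L₃ := hbij.2.1 (Finset.mem_coe.mpr hmem3) (Finset.mem_coe.mpr h3)
      (by rw [hphi, hL3])
    obtain ⟨p, ⟨hp1, hp2⟩, -⟩ := lines_meet (hAlines L₁ h1) (hAlines L₂ h2) h12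
    exact ⟨p, hp1, hp2, heq ▸ hthru L₁ h1 L₂ h2 h12 p hp1 hp2⟩

lemma common_iff (A : Finset (Set ProjPlane)) (hAlines : ∀ L ∈ A, IsProjLine L)
    (hAmult : ∀ p : ProjPlane, IsMultPoint A p → mult A p = 3)
    (φ : Set ProjPlane → ZMod 3 × ZMod 3)
    (hcrit : ∀ L₁ ∈ A, ∀ L₂ ∈ A, ∀ L₃ ∈ A, L₁ ≠ L₂ → L₁ ≠ L₃ → L₂ ≠ L₃ →
        ((∃ p : ProjPlane, p ∈ L₁ ∧ p ∈ L₂ ∧ p ∈ L₃) ↔ φ L₁ + φ L₂ + φ L₃ = 0))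
    (S : Finset (Set ProjPlane)) (hS : S ⊆ A) :
    (∃ p : ProjPlane, ∀ L ∈ S, p ∈ L) ↔
      (S.card ≤ 2 ∨ (S.card = 3 ∧ ∑ L ∈ S, φ L = 0)) := by
  classical
  constructor
  · rintro ⟨p, hp⟩
    by_cases h2 : S.card ≤ 2
    · exact Or.inl h2
    right
    have hsub : S ⊆ linesThrough A p := fun L hL => mem_linesThrough.mpr ⟨hS hL, hp L hL⟩
    have hcle : S.card ≤ mult A p := Finset.card_le_card hsub
    have hm : mult A p = 3 := hAmult p (by unfold IsMultPoint; omega)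
    have h3 : S.card = 3 := by omega
    obtain ⟨L₁, L₂, L₃, h12, h13, h23, rfl⟩ := Finset.card_eq_three.mp h3
    have hsum := (hcrit L₁ (hS (by simp)) L₂ (hS (by simp)) L₃ (hS (by simp)) h12 h13 h23).mp
      ⟨p, hp L₁ (by simp), hp L₂ (by simp), hp L₃ (by simp)⟩
    refine ⟨h3, ?_⟩
    rw [Finset.sum_insert (by simp [h12, h13]), Finset.sum_insert (by simp [h23]),
      Finset.sum_singleton, ← add_assoc]
    exact hsum
  · rintro (h2 | ⟨h3, hsum⟩)
    · by_cases h0 : S.card = 0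
      · rw [Finset.card_eq_zero] at h0
        subst h0
        exact ⟨Classical.arbitrary _, by simp⟩
      by_cases h1 : S.card = 1
      · obtain ⟨L, rfl⟩ := Finset.card_eq_one.mp h1
        obtain ⟨p, hp⟩ := line_nonempty (hAlines L (hS (by simp)))
        exact ⟨p, by simpa using hp⟩
      · obtain ⟨L, K, hLK, rfl⟩ := Finset.card_eq_two.mp (show S.card = 2 by omega)
        obtain ⟨p, ⟨hp1, hp2⟩, -⟩ := lines_meet (hAlines L (hS (by simp)))
          (hAlines K (hS (by simp))) hLK
        refine ⟨p, ?_⟩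
        intro N hN
        simp only [Finset.mem_insert, Finset.mem_singleton] at hN
        rcases hN with rfl | rfl
        exacts [hp1, hp2]
    · obtain ⟨L₁, L₂, L₃, h12, h13, h23, rfl⟩ := Finset.card_eq_three.mp h3
      rw [Finset.sum_insert (by simp [h12, h13]), Finset.sum_insert (by simp [h23]),
        Finset.sum_singleton, ← add_assoc] at hsum
      obtain ⟨p, hp1, hp2, hp3⟩ := (hcrit L₁ (hS (by simp)) L₂ (hS (by simp)) L₃ (hS (by simp))
        h12 h13 h23).mpr hsum
      refine ⟨p, ?_⟩
      intro N hN
      simp only [Finset.mem_insert, Finset.mem_singleton] at hN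
      rcases hN with rfl | rfl | rfl
      exacts [hp1, hp2, hp3]

/-- Arrangements of 9 lines all of whose multiple points are triple points
have exactly 12 triple points and combinatorics given by `F₃ × F₃` (the Ceva arrangement);
in particular any two such arrangements are lattice isomorphic. -/
theorem statement1 (A B : Finset (Set ProjPlane))
    (hAlines : ∀ L ∈ A, IsProjLine L) (hAcard : A.card = 9)
    (hAmult : ∀ p : ProjPlane, IsMultPoint A p → mult A p = 3)
    (hBlines : ∀ L ∈ B, IsProjLine L) (hBcard : B.card = 9)
    (hBmult : ∀ p : ProjPlane, IsMultPoint B p → mult B p = 3) :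
    {p : ProjPlane | mult A p = 3}.ncard = 12 ∧
    (∃ φ : Set ProjPlane → ZMod 3 × ZMod 3, Set.BijOn φ ↑A Set.univ ∧
      ∀ L₁ ∈ A, ∀ L₂ ∈ A, ∀ L₃ ∈ A, L₁ ≠ L₂ → L₁ ≠ L₃ → L₂ ≠ L₃ →
        ((∃ p : ProjPlane, p ∈ L₁ ∧ p ∈ L₂ ∧ p ∈ L₃) ↔ φ L₁ + φ L₂ + φ L₃ = 0)) ∧
    LatticeIso A B := by
  classical
  obtain ⟨φA, hAbij, hAcrit⟩ := triple_iff A hAlines hAcard hAmult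
  obtain ⟨φB, hBbij, hBcrit⟩ := triple_iff B hBlines hBcard hBmult
  refine ⟨count12 A hAlines hAcard hAmult, ⟨φA, hAbij, hAcrit⟩, ?_⟩
  have hinvB : ∀ v : ZMod 3 × ZMod 3, ∃ K, K ∈ B ∧ φB K = v := by
    intro v
    obtain ⟨K, hK, hKv⟩ := hBbij.2.2 (Set.mem_univ v)
    exact ⟨K, Finset.mem_coe.mp hK, hKv⟩
  choose invB hinvB1 hinvB2 using hinvB
  set ψ : Set ProjPlane → Set ProjPlane := fun L => invB (φA L) with hψ
  have hcomm : ∀ L, φB (ψ L) = φA L := fun L => hinvB2 _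
  have hmapsTo : ∀ L ∈ A, ψ L ∈ B := fun L _ => hinvB1 _
  have hinj : ∀ L ∈ A, ∀ K ∈ A, ψ L = ψ K → L = K := by
    intro L hL K hK h
    apply hAbij.2.1 (Finset.mem_coe.mpr hL) (Finset.mem_coe.mpr hK)
    rw [← hcomm L, ← hcomm K, h]
  have hsurj : ∀ K ∈ B, ∃ L ∈ A, ψ L = K := by
    intro K hK
    obtain ⟨L, hL, hLv⟩ := hAbij.2.2 (Set.mem_univ (φB K))
    refine ⟨L, Finset.mem_coe.mp hL, ?_⟩
    apply hBbij.2.1 (Finset.mem_coe.mpr (hmapsTo L (Finset.mem_coe.mp hL))) (Finset.mem_coe.mpr hK)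
    rw [hcomm L, hLv]
  refine ⟨ψ, ⟨fun L hL => hmapsTo L (Finset.mem_coe.mp hL),
    fun L hL K hK h => hinj L (Finset.mem_coe.mp hL) K (Finset.mem_coe.mp hK) h,
    fun K hK => ?_⟩, ?_⟩
  · obtain ⟨L, hL, h⟩ := hsurj K (Finset.mem_coe.mp hK)
    exact ⟨L, Finset.mem_coe.mpr hL, h⟩
  intro S hSA
  have hSimg : S.image ψ ⊆ B := by
    intro K hK
    obtain ⟨L, hL, rfl⟩ := Finset.mem_image.mp hK
    exact hmapsTo L (hSA hL)
  have hinjS : Set.InjOn ψ ↑S := fun x hx y hy h =>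
    hinj x (hSA (Finset.mem_coe.mp hx)) y (hSA (Finset.mem_coe.mp hy)) h
  have hcard : (S.image ψ).card = S.card := Finset.card_image_of_injOn hinjS
  have hsum : ∑ K ∈ S.image ψ, φB K = ∑ L ∈ S, φA L := by
    rw [Finset.sum_image (fun x hx y hy h => hinjS (Finset.mem_coe.mpr hx) (Finset.mem_coe.mpr hy) h)]
    exact Finset.sum_congr rfl (fun L _ => hcomm L)
  have himg_iff : (∃ p : ProjPlane, ∀ L ∈ S, p ∈ ψ L) ↔
      ∃ p : ProjPlane, ∀ K ∈ S.image ψ, p ∈ K := by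
    constructor
    · rintro ⟨p, hp⟩
      refine ⟨p, fun K hK => ?_⟩
      obtain ⟨L, hL, rfl⟩ := Finset.mem_image.mp hK
      exact hp L hL
    · rintro ⟨p, hp⟩
      exact ⟨p, fun L hL => hp _ (Finset.mem_image_of_mem ψ hL)⟩
  rw [common_iff A hAlines hAmult φA hAcrit S hSA, himg_iff,
    common_iff B hBlines hBmult φB hBcrit _ hSimg, hcard, hsum]
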